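/- Let Γ be a finite simplicial graph and Λ an induced subgraph of Γ. Suppose there is an induced four-cycle σ in Γ containing two non-adjacent vertices a₁, a₂ that belong to Λ and containing a vertex b₁ that does not belong to Λ; let b₂ be the vertex of σ opposite to b₁ and set g = b₁b₂ ∈ G_Γ. Then the left cosets gⁿG_Λ for n ∈ ℤ are pairwise distinct, and the intersection ⋂_{n∈ℤ} gⁿG_Λg⁻ⁿ contains the infinite-order element a₁a₂; consequently the special subgroup G_Λ does not have finite height in G_Γ. -/

import Mathlib

open scoped Pointwise ENNReal

namespace RACGPaper

/-- The defining relations of the right-angled Coxeter group of a simple graph. -/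
def racgRels {V : Type*} (Γ : SimpleGraph V) : Set (FreeGroup V) :=
  {r | (∃ v : V, r = FreeGroup.of v * FreeGroup.of v) ∨
       (∃ v w : V, Γ.Adj v w ∧ r = (FreeGroup.of v * FreeGroup.of w) ^ 2)}

/-- The right-angled Coxeter group of a simple graph. -/
def RACG {V : Type*} (Γ : SimpleGraph V) : Type _ := PresentedGroup (racgRels Γ)

instance {V : Type*} (Γ : SimpleGraph V) : Group (RACG Γ) :=
  inferInstanceAs (Group (PresentedGroup (racgRels Γ)))

/-- The generator of `RACG Γ` corresponding to a vertex. -/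
def gen {V : Type*} (Γ : SimpleGraph V) (v : V) : RACG Γ := PresentedGroup.of v

/-- Word length with respect to the vertex generators (which are involutions). -/
noncomputable def len {V : Type*} (Γ : SimpleGraph V) (g : RACG Γ) : ℕ :=
  sInf {n | ∃ l : List V, l.length = n ∧ (l.map (gen Γ)).prod = g}

/-- The word metric on `RACG Γ`. -/
noncomputable def wdist {V : Type*} (Γ : SimpleGraph V) (g h : RACG Γ) : ℕ :=
  len Γ (g⁻¹ * h)

/-- Distance from a point to a subgroup. -/
noncomputable def distH {V : Type*} (Γ : SimpleGraph V) (H : Subgroup (RACG Γ))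
    (x : RACG Γ) : ℕ :=
  sInf {n | ∃ h ∈ H, wdist Γ x h = n}

/-- A `(K, C)`-quasi-geodesic defined on the integer interval `[a, b]`. -/
def IsQuasiGeodesic {V : Type*} (Γ : SimpleGraph V) (K C : ℝ) (a b : ℤ)
    (γ : ℤ → RACG Γ) : Prop :=
  ∀ i ∈ Set.Icc a b, ∀ j ∈ Set.Icc a b,
    |(i : ℝ) - (j : ℝ)| / K - C ≤ (wdist Γ (γ i) (γ j) : ℝ) ∧
    (wdist Γ (γ i) (γ j) : ℝ) ≤ K * |(i : ℝ) - (j : ℝ)| + C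

/-- A subgroup is strongly quasiconvex if every quasi-geodesic with endpoints on it
stays uniformly close to it. -/
def StronglyQuasiconvex {V : Type*} (Γ : SimpleGraph V) (H : Subgroup (RACG Γ)) : Prop :=
  ∀ K C : ℝ, 1 ≤ K → 0 ≤ C → ∃ M : ℝ, 0 ≤ M ∧
    ∀ (a b : ℤ) (γ : ℤ → RACG Γ), IsQuasiGeodesic Γ K C a b γ →
      γ a ∈ H → γ b ∈ H → ∀ i ∈ Set.Icc a b, (distH Γ H (γ i) : ℝ) ≤ M

/-- `H` is malnormal: `gHg⁻¹ ∩ H = {1}` for every `g ∉ H`. -/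
def Malnormal {G : Type*} [Group G] (H : Subgroup G) : Prop :=
  ∀ g : G, g ∉ H → ∀ x : G, x ∈ H → g⁻¹ * x * g ∈ H → x = 1

/-- `H` is almost malnormal: `gHg⁻¹ ∩ H` is finite for every `g ∉ H`. -/
def AlmostMalnormal {G : Type*} [Group G] (H : Subgroup G) : Prop :=
  ∀ g : G, g ∉ H → {x : G | x ∈ H ∧ g⁻¹ * x * g ∈ H}.Finite

/-- An almost malnormal collection of subgroups. -/
def AlmostMalnormalColl {G : Type*} [Group G] (𝓗 : Set (Subgroup G)) : Prop :=
  ∀ H ∈ 𝓗, ∀ H' ∈ 𝓗, ∀ g : G,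
    {x : G | x ∈ H ∧ g⁻¹ * x * g ∈ (H' : Subgroup G)}.Infinite → H = H' ∧ g ∈ H

/-- A group is virtually free if it has a free subgroup of finite index. -/
def VirtuallyFree (G : Type*) [Group G] : Prop :=
  ∃ F : Subgroup G, F.FiniteIndex ∧ IsFreeGroup F

/-- A set of vertices spans a join subgraph. -/
def IsJoin {V : Type*} (Γ : SimpleGraph V) (J : Set V) : Prop :=
  ∃ V₁ V₂ : Set V, V₁.Nonempty ∧ V₂.Nonempty ∧ Disjoint V₁ V₂ ∧ V₁ ∪ V₂ = J ∧
    ∀ v ∈ V₁, ∀ w ∈ V₂, Γ.Adj v w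

/-- The special subgroup generated by a set of vertices. -/
def special {V : Type*} (Γ : SimpleGraph V) (S₁ : Set V) : Subgroup (RACG Γ) :=
  Subgroup.closure (gen Γ '' S₁)

/-- The conjugate subgroup `gHg⁻¹`. -/
def conjSubgroup {G : Type*} [Group G] (g : G) (H : Subgroup G) : Subgroup G :=
  H.map (MulAut.conj g).toMonoidHom

/-- `x` lies in some join subgroup of `RACG Γ`. -/
def InJoinSubgroup {V : Type*} (Γ : SimpleGraph V) (x : RACG Γ) : Prop :=
  ∃ J : Set V, IsJoin Γ J ∧ x ∈ special Γ J

/-- An infinite subgroup is join-free if none of its infinite-order elements is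
conjugate into a join subgroup. -/
def JoinFree {V : Type*} (Γ : SimpleGraph V) (H : Subgroup (RACG Γ)) : Prop :=
  (H : Set (RACG Γ)).Infinite ∧
    ∀ h ∈ H, ¬ IsOfFinOrder h → ∀ g : RACG Γ, ¬ InJoinSubgroup Γ (g * h * g⁻¹)

/-- The star of a vertex: the vertex together with its neighbours. -/
def starSet {V : Type*} (Γ : SimpleGraph V) (v : V) : Set V :=
  {v} ∪ {w | Γ.Adj v w}

/-- `x` lies in some star subgroup of `RACG Γ`. -/
def InStarSubgroup {V : Type*} (Γ : SimpleGraph V) (x : RACG Γ) : Prop :=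
  ∃ v : V, x ∈ special Γ (starSet Γ v)

/-- An infinite subgroup is star-free if none of its infinite-order elements is
conjugate into a star subgroup. -/
def StarFree {V : Type*} (Γ : SimpleGraph V) (H : Subgroup (RACG Γ)) : Prop :=
  (H : Set (RACG Γ)).Infinite ∧
    ∀ h ∈ H, ¬ IsOfFinOrder h → ∀ g : RACG Γ, ¬ InStarSubgroup Γ (g * h * g⁻¹)

/-- Word length with respect to a (symmetrized) set `T` of group elements. -/
noncomputable def wlen {G : Type*} [Group G] (T : Set G) (g : G) : ℕ :=
  sInf {n | ∃ l : List G, (∀ x ∈ l, x ∈ T ∨ x⁻¹ ∈ T) ∧ l.length = n ∧ l.prod = g}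

/-- A finitely generated subgroup of `RACG Γ` is undistorted if the inclusion is a
quasi-isometric embedding with respect to word metrics. -/
def Undistorted {V : Type*} (Γ : SimpleGraph V) (H : Subgroup (RACG Γ)) : Prop :=
  ∃ T : Finset (RACG Γ), (T : Set (RACG Γ)) ⊆ (H : Set (RACG Γ)) ∧
    Subgroup.closure (T : Set (RACG Γ)) = H ∧
    ∃ K C : ℝ, 1 ≤ K ∧ 0 ≤ C ∧ ∀ h ∈ H,
      (wlen (T : Set (RACG Γ)) h : ℝ) / K - C ≤ (len Γ h : ℝ) ∧
      (len Γ h : ℝ) ≤ K * (wlen (T : Set (RACG Γ)) h : ℝ) + C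

/-- A subgroup is stable if it is undistorted and quasi-geodesics with common
endpoints on it uniformly fellow-travel. -/
def Stable {V : Type*} (Γ : SimpleGraph V) (H : Subgroup (RACG Γ)) : Prop :=
  Undistorted Γ H ∧ ∀ K C : ℝ, 1 ≤ K → 0 ≤ C → ∃ M : ℝ, 0 ≤ M ∧
    ∀ (a b a' b' : ℤ) (γ γ' : ℤ → RACG Γ),
      IsQuasiGeodesic Γ K C a b γ → IsQuasiGeodesic Γ K C a' b' γ' →
      γ a = γ' a' → γ b = γ' b' → γ a ∈ H → γ b ∈ H →
      (∀ i ∈ Set.Icc a b, ∃ j ∈ Set.Icc a' b', (wdist Γ (γ i) (γ' j) : ℝ) ≤ M) ∧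
      (∀ j ∈ Set.Icc a' b', ∃ i ∈ Set.Icc a b, (wdist Γ (γ i) (γ' j) : ℝ) ≤ M)

/-- `H` is `N`-join-busting: every join subword of a reduced word representing an
element of `H` has length at most `N`. -/
def JoinBusting {V : Type*} (Γ : SimpleGraph V) (H : Subgroup (RACG Γ)) (N : ℕ) : Prop :=
  ∀ h ∈ H, ∀ w : List V, (w.map (gen Γ)).prod = h → w.length = len Γ h →
    ∀ β : List V, β <:+: w → InJoinSubgroup Γ (β.map (gen Γ)).prod → β.length ≤ N

/-- `a b c d` is an induced four-cycle (in this cyclic order), with diagonals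
`(a, c)` and `(b, d)`. -/
def IsInducedFourCycle {V : Type*} (Γ : SimpleGraph V) (a b c d : V) : Prop :=
  a ≠ c ∧ b ≠ d ∧ ¬ Γ.Adj a c ∧ ¬ Γ.Adj b d ∧
    Γ.Adj a b ∧ Γ.Adj b c ∧ Γ.Adj c d ∧ Γ.Adj d a

/-- A set of vertices is the vertex set of an induced four-cycle. -/
def IsFourCycleSet {V : Type*} (Γ : SimpleGraph V) (Q : Set V) : Prop :=
  ∃ a b c d : V, Q = {a, b, c, d} ∧ IsInducedFourCycle Γ a b c d

/-- The four-cycle graph `Γ⁴`: vertices are induced four-cycles of `Γ`, adjacent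
when they share a pair of non-adjacent vertices. -/
def fourCycleGraph {V : Type*} (Γ : SimpleGraph V) :
    SimpleGraph {Q : Set V // IsFourCycleSet Γ Q} :=
  SimpleGraph.fromRel (fun Q Q' => ∃ u v : V, u ≠ v ∧ ¬ Γ.Adj u v ∧
    u ∈ (Q : Set V) ∩ (Q' : Set V) ∧ v ∈ (Q : Set V) ∩ (Q' : Set V))

/-- A connected component of `Γ⁴` whose support is the whole vertex set of `Γ`. -/
def FullSupportComponent {V : Type*} (Γ : SimpleGraph V)
    (C : (fourCycleGraph Γ).ConnectedComponent) : Prop :=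
  ∀ v : V, ∃ Q : {Q : Set V // IsFourCycleSet Γ Q},
    (fourCycleGraph Γ).connectedComponentMk Q = C ∧ v ∈ (Q : Set V)

/-- `Γ` is CFS: some component of `Γ⁴` has full support. -/
def CFS {V : Type*} (Γ : SimpleGraph V) : Prop :=
  ∃ C : (fourCycleGraph Γ).ConnectedComponent, FullSupportComponent Γ C

/-- Length (number of edges) of a shortest edge path from `x` to `y` in the Cayley
graph all of whose vertices are at distance at least `c` from `H`. -/
noncomputable def avoidDist {V : Type*} (Γ : SimpleGraph V) (H : Subgroup (RACG Γ))
    (c : ℝ) (x y : RACG Γ) : ℝ≥0∞ :=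
  ⨅ (l : List (RACG Γ)) (_ : l.head? = some x) (_ : l.getLast? = some y)
    (_ : l.Chain' fun a b => wdist Γ a b = 1)
    (_ : ∀ z ∈ l, c ≤ (distH Γ H z : ℝ)), ((l.length - 1 : ℕ) : ℝ≥0∞)

/-- The subgroup divergence functions `σⁿ_ρ` of `H` in `RACG Γ`. -/
noncomputable def divFun {V : Type*} (Γ : SimpleGraph V) (H : Subgroup (RACG Γ))
    (ρ : ℝ) (n : ℕ) (r : ℝ) : ℝ≥0∞ :=
  ⨅ (x : RACG Γ) (y : RACG Γ) (_ : (distH Γ H x : ℝ) = r)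
    (_ : (distH Γ H y : ℝ) = r) (_ : avoidDist Γ H r x y ≠ ⊤)
    (_ : (n : ℝ) * r ≤ (wdist Γ x y : ℝ)), avoidDist Γ H (ρ * r) x y

/-- Domination of functions: `f(x) ≤ A g(Bx) + Cx` for large `x`. -/
def FunDom (f g : ℝ → ℝ≥0∞) : Prop :=
  ∃ A B C D : ℝ, 0 < A ∧ 0 < B ∧ 0 < C ∧ 0 < D ∧
    ∀ x : ℝ, D < x → f x ≤ ENNReal.ofReal A * g (B * x) + ENNReal.ofReal (C * x)

/-- Domination of families of divergence functions. -/
def FamDom (δ δ' : ℝ → ℕ → ℝ → ℝ≥0∞) : Prop :=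
  ∃ L : ℝ, L ∈ Set.Ioc (0 : ℝ) 1 ∧ ∃ M : ℕ, 0 < M ∧
    ∀ ρ ∈ Set.Ioc (0 : ℝ) 1, ∀ n : ℕ, 2 ≤ n → FunDom (δ (L * ρ) n) (δ' ρ (M * n))

/-- A family of divergence functions is equivalent to a single function. -/
def FamEquivFun (δ : ℝ → ℕ → ℝ → ℝ≥0∞) (f : ℝ → ℝ≥0∞) : Prop :=
  FamDom δ (fun _ _ => f) ∧ FamDom (fun _ _ => f) δ

/-- Height at most `n`: any `n+1` pairwise distinct cosets give conjugates with
finite total intersection. -/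
def HeightAtMost {G : Type*} [Group G] (H : Subgroup G) (n : ℕ) : Prop :=
  ∀ f : Fin (n + 1) → G, (∀ i j, i ≠ j → (f i)⁻¹ * f j ∉ H) →
    {x : G | ∀ i, (f i)⁻¹ * x * f i ∈ H}.Finite

/-- `H` has finite height in `G`. -/
def FiniteHeight {G : Type*} [Group G] (H : Subgroup G) : Prop :=
  ∃ n : ℕ, HeightAtMost H n

end RACGPaper

/-!
Put `g = b₁ b₂` and `x = a₁ a₂`. Both `b`'s are adjacent to both `a`'s, so `g` commutes with
`x ∈ G_Λ` and every conjugate `gⁿ G_Λ g⁻ⁿ` contains `⟨x⟩`. For non-adjacent `u ≠ w`, the map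
to the infinite dihedral group sending `u ↦ sr 0`, `w ↦ sr 1` and every other generator to `1`
sends `u w` to the rotation `r 1` of infinite order, and sends any special subgroup avoiding `u`
into the group `{1, sr 1}` of order two. For `(a₁, a₂)` this shows that `x` has infinite order;
for `(b₁, b₂)` it shows that no nonzero power of `g` lies in `G_Λ`, so the cosets `gⁿ G_Λ` are
pairwise distinct.
-/

theorem DihedralGroup.not_isOfFinOrder_r {k : ZMod 0} (hk : k ≠ 0) :
    ¬ IsOfFinOrder (DihedralGroup.r k) := by
  rw [isOfFinOrder_iff_pow_eq_one]
  rintro ⟨n, hn, h⟩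
  rw [DihedralGroup.r_pow, DihedralGroup.one_def, DihedralGroup.r.injEq] at h
  exact mul_ne_zero hk (by exact_mod_cast hn.ne') h

theorem inv_zpow_mul_zpow_not_mem {G : Type*} [Group G] {H : Subgroup G} {g : G}
    (hg : ∀ k : ℤ, k ≠ 0 → g ^ k ∉ H) {m n : ℤ} (hmn : m ≠ n) : (g ^ m)⁻¹ * g ^ n ∉ H := by
  rw [← zpow_neg, ← zpow_add]
  exact hg _ (by omega)

namespace RACGPaper

theorem not_finiteHeight_of_commute {G : Type*} [Group G] {H : Subgroup G} {g x : G}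
    (hg : ∀ k : ℤ, k ≠ 0 → g ^ k ∉ H) (hx : x ∈ H) (hx_inf : ¬ IsOfFinOrder x)
    (hxg : Commute x g) : ¬ FiniteHeight H := by
  rintro ⟨n, hn⟩
  have hdistinct : ∀ i j : Fin (n + 1), i ≠ j → (g ^ (i : ℤ))⁻¹ * g ^ (j : ℤ) ∉ H :=
    fun i j hij => inv_zpow_mul_zpow_not_mem hg (by omega)
  refine Set.infinite_of_injective_forall_mem (injective_zpow_iff_not_isOfFinOrder.mpr hx_inf)
    (fun k => ?_) (hn (fun i => g ^ (i : ℤ)) hdistinct)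
  intro i
  rw [(hxg.zpow_zpow k i).symm.inv_mul_cancel]
  exact zpow_mem hx k

variable {V : Type*} {Γ : SimpleGraph V}

theorem gen_mul_self (v : V) : gen Γ v * gen Γ v = 1 :=
  (QuotientGroup.eq_one_iff _).mpr (Subgroup.subset_normalClosure (Or.inl ⟨v, rfl⟩))

theorem commute_gen_of_adj {v w : V} (h : Γ.Adj v w) : Commute (gen Γ v) (gen Γ w) := by
  have hsq : (gen Γ v * gen Γ w) ^ 2 = 1 :=
    (QuotientGroup.eq_one_iff _).mpr (Subgroup.subset_normalClosure (Or.inr ⟨v, w, h, rfl⟩))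
  rwa [sq, mul_eq_one_iff_eq_inv, mul_inv_rev, inv_eq_of_mul_eq_one_left (gen_mul_self v),
    inv_eq_of_mul_eq_one_left (gen_mul_self w)] at hsq

theorem gen_mem_special {S : Set V} {v : V} (hv : v ∈ S) : gen Γ v ∈ special Γ S :=
  Subgroup.subset_closure ⟨v, hv, rfl⟩

section Lift

variable {G : Type*} [Group G] (f : V → G) (hf_sq : ∀ v, f v * f v = 1)
  (hf_comm : ∀ v w, Γ.Adj v w → Commute (f v) (f w))

def lift : RACG Γ →* G :=
  PresentedGroup.toGroup (rels := racgRels Γ) (f := f) <| by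
    rintro r (⟨v, rfl⟩ | ⟨v, w, hvw, rfl⟩)
    · simpa using hf_sq v
    · simp only [map_pow, map_mul, FreeGroup.lift_apply_of]
      rw [sq, mul_assoc, ← mul_assoc (f w), ← (hf_comm v w hvw).eq, mul_assoc, hf_sq, mul_one,
        hf_sq]

@[simp]
theorem lift_gen (v : V) : lift f hf_sq hf_comm (gen Γ v) = f v :=
  PresentedGroup.toGroup.of _

end Lift

section Dihedral

open DihedralGroup

variable [DecidableEq V] {u w : V}

def toInfDihedral (hadj : ¬ Γ.Adj u w) : RACG Γ →* DihedralGroup 0 :=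
  lift (fun v => if v = u then sr 0 else if v = w then sr 1 else 1)
    (fun v => by split_ifs <;> simp)
    (fun v v' hvv' => by
      by_cases hv : v = u ∨ v = w
      · have hv' : v' ≠ u ∧ v' ≠ w := by
          rcases hv with rfl | rfl
          · exact ⟨hvv'.ne', fun h => hadj (h ▸ hvv')⟩
          · exact ⟨fun h => hadj (h ▸ hvv'.symm), hvv'.ne'⟩
        simp [hv'.1, hv'.2]
      · push Not at hv
        simp [hv.1, hv.2])

theorem toInfDihedral_gen_mul_gen (huw : u ≠ w) (hadj : ¬ Γ.Adj u w) :
    toInfDihedral hadj (gen Γ u * gen Γ w) = r 1 := by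
  simp [toInfDihedral, huw.symm, sr_mul_sr]

theorem isOfFinOrder_toInfDihedral_of_mem_special {S : Set V} (hu : u ∉ S)
    (hadj : ¬ Γ.Adj u w) {y : RACG Γ} (hy : y ∈ special Γ S) :
    IsOfFinOrder (toInfDihedral hadj y) := by
  have hle : (special Γ S).map (toInfDihedral hadj) ≤ Subgroup.zpowers (sr 1) := by
    rw [special, MonoidHom.map_closure, Subgroup.closure_le]
    rintro _ ⟨_, ⟨v, hv, rfl⟩, rfl⟩
    have hvu : v ≠ u := fun h => hu (h ▸ hv)
    by_cases hvw : v = w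
    · subst hvw
      simp [toInfDihedral, hvu]
    · simp [toInfDihedral, hvu, hvw, one_mem]
  obtain ⟨k, hk⟩ := hle (Subgroup.mem_map_of_mem _ hy)
  rw [← hk]
  exact (orderOf_pos_iff.mp (by simp [orderOf_sr])).zpow

end Dihedral

theorem gen_mul_gen_not_isOfFinOrder {u w : V} (huw : u ≠ w) (hadj : ¬ Γ.Adj u w) :
    ¬ IsOfFinOrder (gen Γ u * gen Γ w) := fun h => by
  classical
  have h_image := (toInfDihedral hadj).isOfFinOrder h
  rw [toInfDihedral_gen_mul_gen huw] at h_image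
  exact DihedralGroup.not_isOfFinOrder_r one_ne_zero h_image

theorem zpow_gen_mul_gen_not_mem_special {S : Set V} {u w : V} (huw : u ≠ w)
    (hadj : ¬ Γ.Adj u w) (hu : u ∉ S) {k : ℤ} (hk : k ≠ 0) :
    (gen Γ u * gen Γ w) ^ k ∉ special Γ S := fun h => by
  classical
  have h_image := isOfFinOrder_toInfDihedral_of_mem_special hu hadj h
  rw [map_zpow, toInfDihedral_gen_mul_gen huw, DihedralGroup.r_one_zpow] at h_image
  exact DihedralGroup.not_isOfFinOrder_r hk h_image

theorem commute_gen_mul_gen {a₁ a₂ b₁ b₂ : V} (h₁₁ : Γ.Adj a₁ b₁) (h₁₂ : Γ.Adj a₁ b₂)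
    (h₂₁ : Γ.Adj a₂ b₁) (h₂₂ : Γ.Adj a₂ b₂) :
    Commute (gen Γ a₁ * gen Γ a₂) (gen Γ b₁ * gen Γ b₂) :=
  ((commute_gen_of_adj h₁₁).mul_right (commute_gen_of_adj h₁₂)).mul_left
    ((commute_gen_of_adj h₂₁).mul_right (commute_gen_of_adj h₂₂))

end RACGPaper

open RACGPaper in
theorem special_subgroup_not_finiteHeight_general
    {V : Type*} (Γ : SimpleGraph V) (Λ : Set V) (a₁ b₁ a₂ b₂ : V)
    (hcyc : IsInducedFourCycle Γ a₁ b₁ a₂ b₂)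
    (ha₁ : a₁ ∈ Λ) (ha₂ : a₂ ∈ Λ) (hb₁ : b₁ ∉ Λ) :
    (∀ m n : ℤ, m ≠ n →
        ((gen Γ b₁ * gen Γ b₂) ^ m)⁻¹ * (gen Γ b₁ * gen Γ b₂) ^ n ∉ special Γ Λ) ∧
    ¬ IsOfFinOrder (gen Γ a₁ * gen Γ a₂) ∧
    (∀ n : ℤ, ((gen Γ b₁ * gen Γ b₂) ^ n)⁻¹ * (gen Γ a₁ * gen Γ a₂) *
        (gen Γ b₁ * gen Γ b₂) ^ n ∈ special Γ Λ) ∧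
    ¬ FiniteHeight (special Γ Λ) := by
  obtain ⟨ha, hb, ha_nadj, hb_nadj, ha₁b₁, hb₁a₂, ha₂b₂, hb₂a₁⟩ := hcyc
  have hg : ∀ k : ℤ, k ≠ 0 → (gen Γ b₁ * gen Γ b₂) ^ k ∉ special Γ Λ :=
    fun k => zpow_gen_mul_gen_not_mem_special hb hb_nadj hb₁
  have hx : gen Γ a₁ * gen Γ a₂ ∈ special Γ Λ :=
    mul_mem (gen_mem_special ha₁) (gen_mem_special ha₂)
  have hx_inf := gen_mul_gen_not_isOfFinOrder ha ha_nadj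
  have hxg := commute_gen_mul_gen ha₁b₁ hb₂a₁.symm hb₁a₂.symm ha₂b₂
  refine ⟨fun m n => inv_zpow_mul_zpow_not_mem hg, hx_inf, fun n => ?_,
    not_finiteHeight_of_commute hg hx hx_inf hxg⟩
  rwa [(hxg.zpow_right n).symm.inv_mul_cancel]

open RACGPaper in
/-- for a four-cycle `a₁ b₁ a₂ b₂` with `a₁, a₂ ∈ Λ` non-adjacent and
`b₁ ∉ Λ`, the element `g = b₁ b₂` gives pairwise distinct cosets `gⁿ G_Λ`, the
infinite-order element `a₁ a₂` lies in every `gⁿ G_Λ g⁻ⁿ`, and `G_Λ` does not have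
finite height. -/
theorem special_subgroup_not_finiteHeight
    {V : Type*} [Fintype V] (Γ : SimpleGraph V) (Λ : Set V) (a₁ b₁ a₂ b₂ : V)
    (hcyc : IsInducedFourCycle Γ a₁ b₁ a₂ b₂)
    (ha₁ : a₁ ∈ Λ) (ha₂ : a₂ ∈ Λ) (hb₁ : b₁ ∉ Λ) :
    (∀ m n : ℤ, m ≠ n →
        ((gen Γ b₁ * gen Γ b₂) ^ m)⁻¹ * (gen Γ b₁ * gen Γ b₂) ^ n ∉ special Γ Λ) ∧
    ¬ IsOfFinOrder (gen Γ a₁ * gen Γ a₂) ∧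
    (∀ n : ℤ, ((gen Γ b₁ * gen Γ b₂) ^ n)⁻¹ * (gen Γ a₁ * gen Γ a₂) *
        (gen Γ b₁ * gen Γ b₂) ^ n ∈ special Γ Λ) ∧
    ¬ FiniteHeight (special Γ Λ) :=
  special_subgroup_not_finiteHeight_general Γ Λ a₁ b₁ a₂ b₂ hcyc ha₁ ha₂ hb₁
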